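/- Let ℓ ≠ p be primes, with p odd, and let D be the dihedral group of order 2p acting on a ℤ_ℓ-module V, with G = ⟨τ⟩, σ of order 2, and K-, K'-, F-fixed submodules V_K = V^{⟨σ⟩}, V_{K'} = V^{⟨τ²σ⟩}, V_F = V^G. Assume V[N_G] = I_G V (G-cohomological triviality) and I_G V ⊆ V_K V_{K'}. Then V = V_K · V_{K'} · V_F, i.e. the index (V : V_K V_{K'} V_F) = 1. -/
import Mathlib


/-- Fixed-point submodule of a linear automorphism. -/
def fixL {R M : Type*} [CommRing R] [AddCommGroup M] [Module R M]
    (f : M ≃ₗ[R] M) : Submodule R M where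
  carrier := {m | f m = m}
  zero_mem' := by simp
  add_mem' := by
    intro a b ha hb
    simp only [Set.mem_setOf_eq, map_add] at *
    rw [ha, hb]
  smul_mem' := by
    intro c m hm
    simp only [Set.mem_setOf_eq, map_smul] at *
    rw [hm]

/-- Let `ℓ ≠ p` be primes with `p` odd, and let the dihedral group `D = ⟨τ,σ⟩` of order
`2p` act on a `ℤ_ℓ`-module `V`; set `V_K = V^{⟨σ⟩}`, `V_{K'} = V^{⟨τ²σ⟩}`, `V_F = V^{⟨τ⟩}`.
Assume `V[N_G] = I_G V` and `I_G V ⊆ V_K·V_{K'}`.  Then `V = V_K·V_{K'}·V_F`, i.e. the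
index `(V : V_K V_{K'} V_F)` equals `1`. -/
theorem stmt_15 (p ℓ : ℕ) [Fact p.Prime] [Fact ℓ.Prime] (hp : Odd p) (hne : ℓ ≠ p)
    {V : Type*} [AddCommGroup V] [Module ℤ_[ℓ] V]
    (τ σ : V ≃ₗ[ℤ_[ℓ]] V) (hτ : τ ^ p = 1) (hσ : σ ^ 2 = 1) (hc : σ * τ * σ = τ⁻¹)
    (hker : LinearMap.ker (∑ i ∈ Finset.range p, ((τ ^ i : V ≃ₗ[ℤ_[ℓ]] V) : V →ₗ[ℤ_[ℓ]] V))
      = LinearMap.range (τ.toLinearMap - LinearMap.id))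
    (hsub : LinearMap.range (τ.toLinearMap - LinearMap.id) ≤ fixL σ ⊔ fixL (τ ^ 2 * σ)) :
    fixL σ ⊔ fixL (τ ^ 2 * σ) ⊔ fixL τ = ⊤ := by
  set N : V →ₗ[ℤ_[ℓ]] V :=
    ∑ i ∈ Finset.range p, ((τ ^ i : V ≃ₗ[ℤ_[ℓ]] V) : V →ₗ[ℤ_[ℓ]] V) with hN
  have hp1 : 1 ≤ p := (Fact.out : p.Prime).one_lt.le
  -- N v is fixed by τ
  have hfix : ∀ v : V, τ (N v) = N v := by
    intro v
    have h1 : τ (N v) = ∑ i ∈ Finset.range p, (τ ^ (i + 1)) v := by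
      rw [hN]
      simp only [LinearMap.coe_sum, Finset.sum_apply, LinearMap.coe_coe, map_sum]
      refine Finset.sum_congr rfl fun i _ => ?_
      rw [pow_succ']
      rfl
    have h2 : N v = ∑ i ∈ Finset.range p, (τ ^ i) v := by
      rw [hN]; simp
    rw [h1, h2]
    obtain ⟨q, hq⟩ : ∃ q, p = q + 1 := ⟨p - 1, (Nat.succ_pred_eq_of_pos hp1).symm⟩
    subst hq
    rw [Finset.sum_range_succ (fun i => (τ ^ (i + 1)) v) q,
      Finset.sum_range_succ' (fun i => (τ ^ i) v) q]
    congr 1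
    rw [hτ]
    simp
  have hfixpow : ∀ (k : ℕ) (v : V), (τ ^ k) (N v) = N v := by
    intro k v
    induction k with
    | zero => simp
    | succ n ih =>
        rw [pow_succ]
        show (τ ^ n) (τ (N v)) = N v
        rw [hfix, ih]
  have hNapp : ∀ w : V, N w = ∑ i ∈ Finset.range p, (τ ^ i) w := by
    intro w; rw [hN]; simp
  have hNN : ∀ v : V, N (N v) = (p : ℤ_[ℓ]) • N v := by
    intro v
    rw [hNapp (N v)]
    have : ∑ i ∈ Finset.range p, (τ ^ i) (N v) = ∑ _i ∈ Finset.range p, N v :=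
      Finset.sum_congr rfl fun i _ => hfixpow i v
    rw [this, Finset.sum_const, Finset.card_range, ← Nat.cast_smul_eq_nsmul (ℤ_[ℓ])]
  -- p is a unit in ℤ_ℓ
  have hu : IsUnit (p : ℤ_[ℓ]) := by
    rw [PadicInt.isUnit_iff]
    refine le_antisymm (PadicInt.norm_le_one _) ?_
    by_contra h
    push_neg at h
    have : ((p : ℤ) : ℤ_[ℓ]) = (p : ℤ_[ℓ]) := by push_cast; ring
    rw [← this] at h
    have hdvd : (ℓ : ℤ) ∣ (p : ℤ) := (PadicInt.norm_int_lt_one_iff_dvd _).mp h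
    have : ℓ ∣ p := Int.ofNat_dvd.mp hdvd
    exact hne ((Nat.prime_dvd_prime_iff_eq Fact.out Fact.out).mp this)
  rw [eq_top_iff]
  intro v _
  set W := fixL σ ⊔ fixL (τ ^ 2 * σ) ⊔ fixL τ with hW
  have hle1 : fixL σ ⊔ fixL (τ ^ 2 * σ) ≤ W := le_sup_left
  have hle2 : fixL τ ≤ W := le_sup_right
  have hmem1 : N v ∈ W := hle2 (hfix v)
  have hmem2 : (p : ℤ_[ℓ]) • v - N v ∈ W := by
    apply hle1
    apply hsub
    rw [← hker]
    show N ((p : ℤ_[ℓ]) • v - N v) = 0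
    rw [map_sub, map_smul, hNN]
    abel
  have hpv : (p : ℤ_[ℓ]) • v ∈ W := by
    have := W.add_mem hmem2 hmem1
    simpa using this
  have : v = (hu.unit⁻¹ : ℤ_[ℓ]ˣ) • ((p : ℤ_[ℓ]) • v) := by
    rw [Units.smul_def, smul_smul]
    simp
  rw [this]
  exact W.smul_mem _ hpv
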